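/- Let (α_{i_n}) be an Arnoux-Rauzy directive sequence over d letters, (M̃_n) the modified matrices with M̃_n fixing e_j for j ≠ i_n, ‖M̃_n^T‖ ≤ 1, and ‖M̃_n^T e_{i_n}‖_1 < (2^h − d)/(2^h − 1) for all n. If {i_k, i_{k+1}, …, i_{ℓ−1}} = A, then ‖M̃_{[k,ℓ)}‖_∞ < (2^h − d)/(2^h − 1). -/
import Mathlib

open Matrix

def prodRange {d : ℕ} (M : ℕ → Matrix (Fin d) (Fin d) ℝ) (a : ℕ) : ℕ → Matrix (Fin d) (Fin d) ℝ
  | 0 => 1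
  | l + 1 => prodRange M a l * M (a + l)

lemma prodRange_succ_left {d : ℕ} (M : ℕ → Matrix (Fin d) (Fin d) ℝ) (a : ℕ) :
    ∀ L, prodRange M a (L + 1) = M a * prodRange M (a + 1) L := by
  intro L
  induction L with
  | zero =>
    show prodRange M a 0 * M (a + 0) = M a * 1
    simp [prodRange]
  | succ L ih =>
    show prodRange M a (L + 1) * M (a + (L + 1)) = M a * (prodRange M (a + 1) L * M (a + 1 + L))
    rw [ih, mul_assoc]
    ring_nf

lemma rowsum_le_one {d : ℕ} (Mt : ℕ → Matrix (Fin d) (Fin d) ℝ)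
    (hnorm : ∀ n : ℕ, ∀ r : Fin d, ∑ c, |Mt n r c| ≤ 1) :
    ∀ (L a : ℕ) (r : Fin d), ∑ c, |prodRange Mt a L r c| ≤ 1 := by
  intro L
  induction L with
  | zero =>
    intro a r
    simp [prodRange, Matrix.one_apply, apply_ite abs, Finset.sum_ite_eq]
  | succ L ih =>
    intro a r
    show ∑ c, |(prodRange Mt a L * Mt (a + L)) r c| ≤ 1
    calc ∑ c, |(prodRange Mt a L * Mt (a + L)) r c|
        ≤ ∑ c, ∑ b, |prodRange Mt a L r b| * |Mt (a + L) b c| := by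
          refine Finset.sum_le_sum fun c _ => ?_
          rw [Matrix.mul_apply]
          refine (Finset.abs_sum_le_sum_abs _ _).trans ?_
          simp [abs_mul, le_refl]
      _ = ∑ b, |prodRange Mt a L r b| * ∑ c, |Mt (a + L) b c| := by
          rw [Finset.sum_comm]
          simp [Finset.mul_sum]
      _ ≤ ∑ b, |prodRange Mt a L r b| * 1 := by
          refine Finset.sum_le_sum fun b _ => ?_
          exact mul_le_mul_of_nonneg_left (hnorm _ _) (abs_nonneg _)
      _ = ∑ b, |prodRange Mt a L r b| := by simp
      _ ≤ 1 := ih a r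

lemma row_eq_id {d : ℕ} (i : ℕ → Fin d) (Mt : ℕ → Matrix (Fin d) (Fin d) ℝ)
    (hcol : ∀ n : ℕ, ∀ j : Fin d, j ≠ i n → ∀ r, Mt n r j = if r = j then 1 else 0)
    (hnorm : ∀ n : ℕ, ∀ r : Fin d, ∑ c, |Mt n r c| ≤ 1)
    (n : ℕ) (r : Fin d) (hr : r ≠ i n) : ∀ c, Mt n r c = if r = c then 1 else 0 := by
  have hzero : Mt n r (i n) = 0 := by
    have h1 := hnorm n r
    have hsplit : ∑ c, |Mt n r c| =
        |Mt n r (i n)| + ∑ c ∈ Finset.univ.erase (i n), |Mt n r c| :=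
      (Finset.add_sum_erase _ _ (Finset.mem_univ _)).symm
    have herase : ∑ c ∈ Finset.univ.erase (i n), |Mt n r c| = 1 := by
      have : ∀ c ∈ Finset.univ.erase (i n), |Mt n r c| = if r = c then 1 else 0 := by
        intro c hc
        rw [hcol n c (Finset.ne_of_mem_erase hc) r]
        split <;> simp
      rw [Finset.sum_congr rfl this, Finset.sum_ite_eq, if_pos]
      exact Finset.mem_erase.mpr ⟨hr, Finset.mem_univ r⟩
    rw [hsplit, herase] at h1
    have : |Mt n r (i n)| ≤ 0 := by linarith
    exact abs_eq_zero.mp (le_antisymm this (abs_nonneg _))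
  intro c
  by_cases hc : c = i n
  · subst hc
    rw [hzero, if_neg hr]
  · exact hcol n c hc r

lemma main_lem {d : ℕ} (q : ℝ) (i : ℕ → Fin d) (Mt : ℕ → Matrix (Fin d) (Fin d) ℝ)
    (hcol : ∀ n : ℕ, ∀ j : Fin d, j ≠ i n → ∀ r, Mt n r j = if r = j then 1 else 0)
    (hnorm : ∀ n : ℕ, ∀ r : Fin d, ∑ c, |Mt n r c| ≤ 1)
    (hrow : ∀ n : ℕ, ∑ c, |Mt n (i n) c| < q) :
    ∀ (L a : ℕ) (r : Fin d), (∃ t, t < L ∧ i (a + t) = r) →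
      ∑ c, |prodRange Mt a L r c| < q := by
  intro L
  induction L with
  | zero => rintro a r ⟨t, ht, -⟩; exact absurd ht (Nat.not_lt_zero t)
  | succ L ih =>
    rintro a r ⟨t, ht, hit⟩
    rw [prodRange_succ_left]
    set B := prodRange Mt (a + 1) L with hB
    by_cases hra : r = i a
    · calc ∑ c, |(Mt a * B) r c|
          ≤ ∑ c, ∑ b, |Mt a r b| * |B b c| := by
            refine Finset.sum_le_sum fun c _ => ?_
            rw [Matrix.mul_apply]
            refine (Finset.abs_sum_le_sum_abs _ _).trans ?_
            simp [abs_mul, le_refl]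
        _ = ∑ b, |Mt a r b| * ∑ c, |B b c| := by
            rw [Finset.sum_comm]
            simp [Finset.mul_sum]
        _ ≤ ∑ b, |Mt a r b| * 1 := by
            refine Finset.sum_le_sum fun b _ => ?_
            exact mul_le_mul_of_nonneg_left (rowsum_le_one Mt hnorm L (a + 1) b)
              (abs_nonneg _)
        _ = ∑ b, |Mt a r b| := by simp
        _ < q := by rw [hra]; exact hrow a
    · have hMB : ∀ c, (Mt a * B) r c = B r c := by
        intro c
        rw [Matrix.mul_apply]
        have : ∀ b, Mt a r b * B b c = (if r = b then 1 else 0) * B b c := by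
          intro b
          rw [row_eq_id i Mt hcol hnorm a r hra b]
        rw [Finset.sum_congr rfl fun b _ => this b]
        simp [Finset.sum_ite_eq]
      simp only [hMB]
      obtain ⟨s, rfl⟩ : ∃ s, t = s + 1 := by
        cases t with
        | zero => exact absurd hit.symm (by simpa using hra)
        | succ s => exact ⟨s, rfl⟩
      exact ih (a + 1) r ⟨s, by omega, by rw [← hit]; ring_nf⟩

theorem stmt8 (d h : ℕ) (hdh : d < 2 ^ h) (i : ℕ → Fin d)
    (Mt : ℕ → Matrix (Fin d) (Fin d) ℝ)
    (hcol : ∀ n : ℕ, ∀ j : Fin d, j ≠ i n → ∀ r, Mt n r j = if r = j then 1 else 0)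
    (hnorm : ∀ n : ℕ, ∀ r : Fin d, ∑ c, |Mt n r c| ≤ 1)
    (hrow : ∀ n : ℕ, ∑ c, |Mt n (i n) c| < ((2 : ℝ) ^ h - d) / ((2 : ℝ) ^ h - 1))
    (k l : ℕ) (hkl : k ≤ l)
    (hall : Finset.image (fun t => i (k + t)) (Finset.range (l - k)) = Finset.univ) :
    ∀ r : Fin d, ∑ c, |(prodRange Mt k (l - k)) r c| < ((2 : ℝ) ^ h - d) / ((2 : ℝ) ^ h - 1) := by
  intro r
  have hr : r ∈ Finset.image (fun t => i (k + t)) (Finset.range (l - k)) := by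
    rw [hall]; exact Finset.mem_univ r
  obtain ⟨t, ht, hit⟩ := Finset.mem_image.mp hr
  exact main_lem _ i Mt hcol hnorm hrow (l - k) k r ⟨t, Finset.mem_range.mp ht, hit⟩
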